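/- Let $n > 2k > 0$, $q > k$, and let $\nu : \mathbb{R} \to \mathbb{R}$ be continuous. Suppose $(x,y) : (T_0, T) \to \mathbb{R}^2$ with $x, y > 0$ solves the system $\dot x = x(\nu(t) - x - qy)$, $\dot y = y(-\frac{n-2k}{k} + \frac{x}{k} + y)$, and that $\nu(t) < \frac{(n-2k)(q+1)}{k+1}$ for all $t$. Define $G(x,y) = x + \frac{(n-2k)(q+1)}{k+1}(\frac{k}{n-2k}y - 1)$. If $G(x(t_0), y(t_0)) \leq 0$ for some $t_0 \in (T_0,T)$, then $G(x(t), y(t)) < 0$ for all $t \in (t_0, T)$. -/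

import Mathlib

/-!
Along a solution, `g(t) = G(x(t), y(t))` satisfies the linear relation
`g' = (y - x) g + x (ν - (n-2k)(q+1)/(k+1))`, so wherever `g` vanishes its derivative is
`x (ν - (n-2k)(q+1)/(k+1)) < 0`. A differentiable function that starts nonpositive and crosses
zero only downwards stays nonpositive (a barrier argument), and it cannot touch zero later
either, since such a point would be an interior maximum with vanishing derivative.
-/

open Set

theorem neg_of_hasDerivAt_neg_of_eq_zero {g g' : ℝ → ℝ} {a b t₀ : ℝ}
    (hg : ∀ s ∈ Ioo a b, HasDerivAt g (g' s) s) (hzero : ∀ s ∈ Ioo a b, g s = 0 → g' s < 0)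
    (ht₀ : t₀ ∈ Ioo a b) (hg₀ : g t₀ ≤ 0) : ∀ t ∈ Ioo t₀ b, g t < 0 := by
  intro t ht
  obtain ⟨t', htt', ht'b⟩ := exists_between ht.2
  have hsub : Icc t₀ t' ⊆ Ioo a b := Icc_subset_Ioo ht₀.1 ht'b
  have hnonpos : ∀ s ∈ Icc t₀ t', g s ≤ 0 :=
    image_le_of_deriv_right_lt_deriv_boundary (B := fun _ => 0) (B' := fun _ => 0)
      (fun s hs => (hg s (hsub hs)).continuousAt.continuousWithinAt)
      (fun s hs => (hg s (hsub (Ico_subset_Icc_self hs))).hasDerivWithinAt) hg₀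
      (fun _ => hasDerivAt_const _ _) (fun s hs => hzero s (hsub (Ico_subset_Icc_self hs)))
  have htmem : t ∈ Icc t₀ t' := ⟨ht.1.le, htt'.le⟩
  refine (hnonpos t htmem).lt_of_ne fun hgt => ?_
  have hmax : IsLocalMax g t :=
    Filter.mem_of_superset (Icc_mem_nhds ht.1 htt') fun s hs => hgt ▸ hnonpos s hs
  have hderiv := hmax.hasDerivAt_eq_zero (hg t (hsub htmem))
  linarith [hzero t (hsub htmem) hgt]

theorem hasDerivAt_lotkaVolterra_barrier {n k q v : ℝ} (hk : k ≠ 0) (hn : n - 2 * k ≠ 0)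
    (hk₁ : k + 1 ≠ 0) {x y : ℝ → ℝ} {t : ℝ}
    (hx : HasDerivAt x (x t * (v - x t - q * y t)) t)
    (hy : HasDerivAt y (y t * (-(n - 2 * k) / k + x t / k + y t)) t) :
    HasDerivAt (fun s => x s + (n - 2 * k) * (q + 1) / (k + 1) * (k / (n - 2 * k) * y s - 1))
      ((y t - x t) * (x t + (n - 2 * k) * (q + 1) / (k + 1) * (k / (n - 2 * k) * y t - 1)) +
        x t * (v - (n - 2 * k) * (q + 1) / (k + 1))) t := by
  refine (hx.add (((hy.const_mul (k / (n - 2 * k))).sub_const 1).const_mul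
    ((n - 2 * k) * (q + 1) / (k + 1)))).congr_deriv ?_
  field_simp
  ring

theorem Gminus_invariance_general (n k q T0 T : ℝ) (hk : 0 < k) (hn : 2 * k < n)
    (ν : ℝ → ℝ)
    (hνb : ∀ t : ℝ, ν t < (n - 2 * k) * (q + 1) / (k + 1))
    (x y : ℝ → ℝ)
    (hx : ∀ t ∈ Set.Ioo T0 T, HasDerivAt x (x t * (ν t - x t - q * y t)) t)
    (hy : ∀ t ∈ Set.Ioo T0 T, HasDerivAt y (y t * (-(n - 2 * k) / k + x t / k + y t)) t)
    (hxpos : ∀ t ∈ Set.Ioo T0 T, 0 < x t)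
    (G : ℝ → ℝ → ℝ)
    (hG : ∀ a b : ℝ, G a b = a + (n - 2 * k) * (q + 1) / (k + 1) * (k / (n - 2 * k) * b - 1))
    (t0 : ℝ) (ht0 : t0 ∈ Set.Ioo T0 T) (hG0 : G (x t0) (y t0) ≤ 0) :
    ∀ t ∈ Set.Ioo t0 T, G (x t) (y t) < 0 := by
  simp only [hG] at hG0 ⊢
  refine neg_of_hasDerivAt_neg_of_eq_zero
    (fun s hs => hasDerivAt_lotkaVolterra_barrier hk.ne' (by linarith) (by linarith)
      (hx s hs) (hy s hs)) (fun s hs hzero => ?_) ht0 hG0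
  rw [hzero, mul_zero, zero_add]
  exact mul_neg_of_pos_of_neg (hxpos s hs) (sub_neg.mpr (hνb s))

/-- Forward invariance of `G₋` for the non-autonomous Lotka-Volterra
system: if `(x,y)` is a positive solution on `(T₀,T)` of
`ẋ = x(ν(t) - x - qy)`, `ẏ = y(-(n-2k)/k + x/k + y)` with `ν(t) < (n-2k)(q+1)/(k+1)`,
and `G(x(t₀), y(t₀)) ≤ 0`, then `G(x(t), y(t)) < 0` for all `t ∈ (t₀, T)`. -/
theorem Gminus_invariance (n k q T0 T : ℝ) (hk : 0 < k) (hn : 2 * k < n) (hq : k < q)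
    (ν : ℝ → ℝ) (hν_cont : Continuous ν)
    (hνb : ∀ t : ℝ, ν t < (n - 2 * k) * (q + 1) / (k + 1))
    (x y : ℝ → ℝ)
    (hx : ∀ t ∈ Set.Ioo T0 T, HasDerivAt x (x t * (ν t - x t - q * y t)) t)
    (hy : ∀ t ∈ Set.Ioo T0 T, HasDerivAt y (y t * (-(n - 2 * k) / k + x t / k + y t)) t)
    (hxpos : ∀ t ∈ Set.Ioo T0 T, 0 < x t) (hypos : ∀ t ∈ Set.Ioo T0 T, 0 < y t)
    (G : ℝ → ℝ → ℝ)
    (hG : ∀ a b : ℝ, G a b = a + (n - 2 * k) * (q + 1) / (k + 1) * (k / (n - 2 * k) * b - 1))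
    (t0 : ℝ) (ht0 : t0 ∈ Set.Ioo T0 T) (hG0 : G (x t0) (y t0) ≤ 0) :
    ∀ t ∈ Set.Ioo t0 T, G (x t) (y t) < 0 :=
  Gminus_invariance_general n k q T0 T hk hn ν hνb x y hx hy hxpos G hG t0 ht0 hG0
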